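/- arXiv:1107.3264 — 2 statements merged into one kernel-verified Lean document; each statement's English description precedes it below -/
import Mathlib

section
/- Two-function generalization of Pawlikowska's theorem: Let a < b be real numbers, let n ≥ 1, and let f, g : [a,b] → ℝ be n-times differentiable on [a,b] with g⁽ⁿ⁾(a) ≠ g⁽ⁿ⁾(b). Then there exists η ∈ (a,b) such that f(a) - T_n(f, η)(a) = ((f⁽ⁿ⁾(b) - f⁽ⁿ⁾(a))/(g⁽ⁿ⁾(b) - g⁽ⁿ⁾(a))) · (g(a) - T_n(g, η)(a)), where T_n(h, x₀)(x) is the n-th Taylor polynomial of h at x₀. -/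
open Set Finset

lemma poly_deriv (a : ℝ) (c : ℕ → ℝ) (m : ℕ) (x : ℝ) :
    HasDerivAt (fun y => ∑ j ∈ Finset.range (m+1), c j * (y-a)^j / j.factorial)
      (∑ j ∈ Finset.range m, c (j+1) * (x-a)^j / j.factorial) x := by
  induction m with
  | zero =>
      simp only [Finset.range_one, Finset.sum_singleton, Finset.range_zero, Finset.sum_empty]
      simpa using (hasDerivAt_const x (c 0 * 1 / (Nat.factorial 0 : ℝ)))
  | succ m ih =>
      have h1 : HasDerivAt (fun y : ℝ => c (m+1) * (y-a)^(m+1) / ((m+1).factorial : ℝ))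
          (c (m+1) * (x-a)^m / (m.factorial : ℝ)) x := by
        have : HasDerivAt (fun y : ℝ => (y-a)^(m+1)) ((m+1 : ℕ) * (x-a)^m) x := by
          refine ((hasDerivAt_pow (m+1) (x-a)).comp x ((hasDerivAt_id x).sub_const a)).congr_deriv ?_
          simp
        have := (this.const_mul (c (m+1))).div_const ((m+1).factorial : ℝ)
        convert this using 1
        · rfl
        · rfl
        rw [Nat.factorial_succ]
        push_cast
        field_simp
      have := (ih.add h1)
      convert this using 1
      · rfl
      · rfl
      · funext y
        rw [Finset.sum_range_succ]
        rfl
      · rw [Finset.sum_range_succ]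

lemma sum_deriv (s : Set ℝ) (a : ℝ) (C : ℕ → ℝ → ℝ) (n : ℕ) (hn : 1 ≤ n)
    (hC : ∀ i < n, ∀ x ∈ s, HasDerivWithinAt (C i) (C (i+1) x) s x)
    (x : ℝ) (hx : x ∈ s) :
    HasDerivWithinAt (fun y => ∑ i ∈ Finset.range n, C i y * (a - y)^i / i.factorial)
      (C n x * (a - x)^(n-1) / ((n-1).factorial : ℝ)) s x := by
  induction n, hn using Nat.le_induction with
  | base =>
      simp only [Finset.range_one, Finset.sum_singleton, pow_zero, Nat.factorial_zero]
      simpa using (hC 0 (by norm_num) x hx)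
  | succ m hm ih =>
      have ih' := ih (fun i hi => hC i (Nat.lt_succ_of_lt hi))
      have h1 : HasDerivWithinAt (fun y => C m y * (a - y)^m / (m.factorial : ℝ))
          (C (m+1) x * (a-x)^m / (m.factorial : ℝ) - C m x * (a-x)^(m-1) / ((m-1).factorial : ℝ))
          s x := by
        have hpow : HasDerivWithinAt (fun y : ℝ => (a - y)^m) (-(m * (a-x)^(m-1))) s x := by
          have h := (hasDerivAt_pow m (a - x)).comp_hasDerivWithinAt x
            (((hasDerivWithinAt_const x s a).sub (hasDerivWithinAt_id x s)))
          exact h.congr_deriv (by simp)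
        have := ((hC m (Nat.lt_succ_self m) x hx).mul hpow).div_const (m.factorial : ℝ)
        convert this using 1
        · rfl
        · rfl
        · rfl
        have hmfac : (m.factorial : ℝ) = m * ((m-1).factorial : ℝ) := by
          obtain ⟨k, rfl⟩ : ∃ k, m = k + 1 := ⟨m - 1, by omega⟩
          simp [Nat.factorial_succ]
        rw [hmfac]
        have : (m:ℝ) ≠ 0 := Nat.cast_ne_zero.mpr (by omega)
        field_simp
        ring
      have := ih'.add h1
      convert this using 1
      · rfl
      · rfl
      · funext y
        rw [Finset.sum_range_succ]
        rfl
      · simp only [Nat.add_sub_cancel]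
        have : m + 1 - 1 = m := rfl
        ring
lemma pawlikowska_zero (a b : ℝ) (hab : a < b) (n : ℕ) (hn : 1 ≤ n)
    (K : ℕ → ℝ → ℝ)
    (hK : ∀ i < n, ∀ x ∈ Set.Icc a b, HasDerivWithinAt (K i) (K (i+1) x) (Set.Icc a b) x)
    (hKa : K n a = 0) (hKb : K n b = 0) :
    ∃ η ∈ Set.Ioo a b,
      K 0 a - ∑ i ∈ Finset.range (n+1), K i η * (a - η)^i / i.factorial = 0 := by
  set I := Set.Icc a b with hI
  have haI : a ∈ I := ⟨le_refl a, le_of_lt hab⟩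
  have hbI : b ∈ I := ⟨le_of_lt hab, le_refl b⟩
  set φ : ℝ → ℝ := fun x => K 0 a - ∑ i ∈ Finset.range n, K i x * (a - x)^i / i.factorial
    with hφdef
  set φ' : ℝ → ℝ := fun x => -(K n x * (a - x)^(n-1) / ((n-1).factorial : ℝ)) with hφ'def
  have hφ' : ∀ x ∈ I, HasDerivWithinAt φ (φ' x) I x := by
    intro x hx
    have := (hasDerivWithinAt_const x I (K 0 a)).sub (sum_deriv I a K n hn hK x hx)
    rw [zero_sub] at this
    exact this
  have sum_at_a : ∀ (C : ℕ → ℝ → ℝ) (m : ℕ), 1 ≤ m →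
      ∑ i ∈ Finset.range m, C i a * (a - a)^i / i.factorial = C 0 a := by
    intro C m hm
    rw [Finset.sum_eq_single_of_mem 0 (Finset.mem_range.mpr (by omega))]
    · simp
    · intro i _ hi
      simp [sub_self, zero_pow hi]
  have hφa : φ a = 0 := by
    show K 0 a - ∑ i ∈ Finset.range n, K i a * (a - a)^i / i.factorial = 0
    rw [sum_at_a K n hn, sub_self]
  have hφ'b : φ' b = 0 := by simp [hφ'def, hKb]
  have hφcont : ContinuousOn φ I := fun x hx => (hφ' x hx).continuousWithinAt
  -- the remainder family
  set R : ℕ → ℝ → ℝ := fun i x =>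
    K i x - ∑ j ∈ Finset.range (n - i + 1), K (i+j) a * (x-a)^j / j.factorial with hRdef
  have hRa : ∀ i, i ≤ n → R i a = 0 := by
    intro i hi
    show K i a - ∑ j ∈ Finset.range (n - i + 1), K (i+j) a * (a-a)^j / j.factorial = 0
    rw [Finset.sum_eq_single_of_mem 0 (Finset.mem_range.mpr (by omega))]
    · simp
    · intro j _ hj
      simp [sub_self, zero_pow hj]
  have hRn : ∀ x, R n x = K n x := by
    intro x
    show K n x - ∑ j ∈ Finset.range (n - n + 1), K (n+j) a * (x-a)^j / j.factorial = K n x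
    rw [Nat.sub_self]
    simp [hKa]
  have hR' : ∀ i < n, ∀ x ∈ I, HasDerivWithinAt (R i) (R (i+1) x) I x := by
    intro i hi x hx
    have hpoly := (poly_deriv a (fun j => K (i+j) a) (n - i) x).hasDerivWithinAt (s := I)
    have h := (hK i hi x hx).sub hpoly
    have hval : R (i+1) x = K (i+1) x
        - ∑ j ∈ Finset.range (n-i), K (i+(j+1)) a * (x-a)^j / j.factorial := by
      show K (i+1) x - ∑ j ∈ Finset.range (n-(i+1)+1), K ((i+1)+j) a * (x-a)^j / j.factorial = _
      rw [show n-(i+1)+1 = n-i by omega]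
      congr 1
      exact Finset.sum_congr rfl (fun j _ => by rw [show (i+1)+j = i+(j+1) by omega])
    rw [hval]
    exact h
  -- the key bound near `a`
  have hbound : ∀ ε : ℝ, 0 < ε → ∀ d, 1 ≤ d → ∃ δ > 0, ∀ e, 1 ≤ e → e ≤ d → e ≤ n →
      ∀ x ∈ I, x - a ≤ δ → |R (n-e) x| ≤ ε * (x-a)^e := by
    intro ε hε d hd
    induction d, hd using Nat.le_induction with
    | base =>
        have hder : HasDerivWithinAt (R (n-1)) 0 I a := by
          have := hR' (n-1) (by omega) a haI
          rwa [show n - 1 + 1 = n by omega, hRn, hKa] at this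
        rw [hasDerivWithinAt_iff_isLittleO] at hder
        have hev := hder.def hε
        simp only [hRa (n-1) (by omega), smul_zero, sub_zero, Real.norm_eq_abs] at hev
        rcases Metric.mem_nhdsWithin_iff.mp hev with ⟨δ, hδ, hsub⟩
        refine ⟨δ/2, by positivity, ?_⟩
        intro e he1 he2 he3 x hx hxa
        have he : e = 1 := by omega
        subst he
        have hxge : a ≤ x := hx.1
        have hmem : x ∈ Metric.ball a δ ∩ I := by
          refine ⟨?_, hx⟩
          rw [Metric.mem_ball, Real.dist_eq, abs_of_nonneg (by linarith)]
          linarith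
        have h2 := hsub hmem
        simp only [Set.mem_setOf_eq] at h2
        calc |R (n-1) x| ≤ ε * |x - a| := h2
          _ = ε * (x-a)^1 := by rw [abs_of_nonneg (by linarith)]; ring
    | succ d hd ih =>
        rcases ih with ⟨δ, hδ, hih⟩
        refine ⟨δ, hδ, ?_⟩
        intro e he1 he2 he3 x hx hxa
        rcases Nat.lt_or_ge e (d+1) with h|h
        · exact hih e he1 (by omega) he3 x hx hxa
        have he : e = d + 1 := by omega
        subst he
        have hxa' : a ≤ x := hx.1
        have hxb : x ≤ b := hx.2
        have hIcc : Set.Icc a x ⊆ I := Set.Icc_subset_Icc (le_refl a) hxb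
        have hi1 : n - (d+1) + 1 = n - d := by omega
        have hder : ∀ t ∈ Set.Icc a x,
            HasDerivWithinAt (R (n-(d+1))) (R (n-d) t) (Set.Icc a x) t := by
          intro t ht
          have := (hR' (n-(d+1)) (by omega) t (hIcc ht)).mono hIcc
          rwa [hi1] at this
        have hbnd : ∀ t ∈ Set.Icc a x, ‖R (n-d) t‖ ≤ ε * (x-a)^d := by
          intro t ht
          have h1 := hih d (by omega) (le_refl d) (by omega) t (hIcc ht)
            (by linarith [ht.2])
          rw [Real.norm_eq_abs]
          refine le_trans h1 ?_
          apply mul_le_mul_of_nonneg_left _ (le_of_lt hε)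
          exact pow_le_pow_left₀ (by linarith [ht.1]) (by linarith [ht.2]) d
        have hmvt := (convex_Icc a x).norm_image_sub_le_of_norm_hasDerivWithin_le
          hder hbnd (Set.right_mem_Icc.mpr hxa') (Set.left_mem_Icc.mpr hxa')
        rw [hRa (n-(d+1)) (by omega), zero_sub, Real.norm_eq_abs, Real.norm_eq_abs, abs_neg,
          abs_sub_comm a x, abs_of_nonneg (show (0:ℝ) ≤ x - a by linarith)] at hmvt
        calc |R (n-(d+1)) x| ≤ ε * (x-a)^d * (x-a) := hmvt
          _ = ε * (x-a)^(d+1) := by ring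
  -- φ agrees with the R-version
  have hφR : ∀ x ∈ I, φ x = -∑ i ∈ Finset.range n, R i x * (a - x)^i / i.factorial := by
    intro x hx
    set g : ℝ → ℝ := fun y => φ y + ∑ i ∈ Finset.range n, R i y * (a - y)^i / i.factorial
      with hgdef
    have hg' : ∀ y ∈ I, HasDerivWithinAt g 0 I y := by
      intro y hy
      have h2 := sum_deriv I a R n hn hR' y hy
      have h3 := (hφ' y hy).add h2
      rw [hRn] at h3
      have : φ' y + K n y * (a - y)^(n-1) / ((n-1).factorial : ℝ) = 0 := by
        rw [hφ'def]; ring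
      rwa [this] at h3
    have hga : g a = 0 := by
      show φ a + ∑ i ∈ Finset.range n, R i a * (a - a)^i / i.factorial = 0
      rw [sum_at_a R n hn, hφa, hRa 0 (by omega), add_zero]
    have hmvt := (convex_Icc a b).norm_image_sub_le_of_norm_hasDerivWithin_le (C := 0)
      hg' (fun y hy => by simp) hx haI
    rw [hga, zero_sub, norm_neg] at hmvt
    simp only [zero_mul, norm_le_zero_iff] at hmvt
    have hgx : g x = 0 := hmvt
    show φ x = _
    have : φ x + ∑ i ∈ Finset.range n, R i x * (a - x)^i / i.factorial = 0 := hgx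
    linarith
  -- the quotient function
  set u : ℝ → ℝ := fun x => φ x / (x - a)^n with hudef
  have hua : u a = 0 := by
    show φ a / (a - a)^n = 0
    rw [hφa, zero_div]
  have hban : (0:ℝ) < (b - a)^n := pow_pos (sub_pos.mpr hab) n
  -- continuity of u at a within I
  have hucontA : ContinuousWithinAt u I a := by
    rw [Metric.continuousWithinAt_iff]
    intro ε hε
    have hε' : 0 < ε / (2*((n:ℝ)+1)) := div_pos hε (by positivity)
    rcases hbound _ hε' n hn with ⟨δ, hδ, hb2⟩
    refine ⟨min δ 1, lt_min hδ one_pos, ?_⟩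
    intro x hx hdist
    rw [Real.dist_eq, hua, sub_zero]
    rcases eq_or_lt_of_le hx.1 with heq|hlt
    · rw [← heq, hua, abs_zero]; exact hε
    have hxa : 0 < x - a := sub_pos.mpr hlt
    have hxaδ : x - a ≤ δ := by
      rw [Real.dist_eq, abs_of_pos hxa] at hdist
      exact le_trans (le_of_lt hdist) (min_le_left _ _)
    have hterm : ∀ i ∈ Finset.range n, |R i x * (a - x)^i / i.factorial|
        ≤ (ε / (2*((n:ℝ)+1))) * (x-a)^n := by
      intro i hi
      have hin : i < n := Finset.mem_range.mp hi
      have h1 : |R i x| ≤ (ε / (2*((n:ℝ)+1))) * (x-a)^(n-i) := by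
        have := hb2 (n-i) (by omega) (by omega) (by omega) x hx hxaδ
        rwa [show n - (n-i) = i by omega] at this
      have hfac1 : (1:ℝ) ≤ (i.factorial : ℝ) := by exact_mod_cast i.factorial_pos
      rw [abs_div, abs_mul, abs_pow, abs_sub_comm a x, abs_of_pos hxa, Nat.abs_cast]
      have h2 : |R i x| * (x-a)^i / (i.factorial:ℝ) ≤ |R i x| * (x-a)^i :=
        div_le_self (by positivity) hfac1
      refine le_trans h2 ?_
      calc |R i x| * (x-a)^i ≤ ((ε / (2*((n:ℝ)+1))) * (x-a)^(n-i)) * (x-a)^i :=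
            mul_le_mul_of_nonneg_right h1 (by positivity)
        _ = (ε / (2*((n:ℝ)+1))) * (x-a)^n := by
            rw [mul_assoc, ← pow_add, Nat.sub_add_cancel (le_of_lt hin)]
    have hφb : |φ x| ≤ (n:ℝ) * ((ε / (2*((n:ℝ)+1))) * (x-a)^n) := by
      rw [hφR x hx, abs_neg]
      calc |∑ i ∈ Finset.range n, R i x * (a - x)^i / i.factorial|
          ≤ ∑ i ∈ Finset.range n, |R i x * (a - x)^i / i.factorial| :=
            Finset.abs_sum_le_sum_abs _ _
        _ ≤ ∑ _i ∈ Finset.range n, (ε / (2*((n:ℝ)+1))) * (x-a)^n :=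
            Finset.sum_le_sum hterm
        _ = (n:ℝ) * ((ε / (2*((n:ℝ)+1))) * (x-a)^n) := by
            rw [Finset.sum_const, Finset.card_range, nsmul_eq_mul]
    show |φ x / (x-a)^n| < ε
    rw [abs_div, abs_pow, abs_of_pos hxa, div_lt_iff₀ (by positivity)]
    have hnn : (n:ℝ) * (ε / (2*((n:ℝ)+1))) < ε := by
      have h0 : (0:ℝ) < 2*((n:ℝ)+1) := by positivity
      rw [mul_div_assoc']
      rw [div_lt_iff₀ h0]
      have hc : (0:ℝ) ≤ (n:ℝ) := Nat.cast_nonneg n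
      nlinarith
    calc |φ x| ≤ (n:ℝ) * ((ε / (2*((n:ℝ)+1))) * (x-a)^n) := hφb
      _ = ((n:ℝ) * (ε / (2*((n:ℝ)+1)))) * (x-a)^n := by ring
      _ < ε * (x-a)^n := mul_lt_mul_of_pos_right hnn (by positivity)
  have hucont : ContinuousOn u I := by
    intro x hx
    rcases eq_or_ne x a with rfl|hxa
    · exact hucontA
    · have hne : (x-a)^n ≠ 0 := pow_ne_zero _ (sub_ne_zero.mpr hxa)
      exact (hφcont x hx).div (((continuous_id.sub continuous_const).pow n).continuousWithinAt) hne
  -- derivative of u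
  set D : ℝ → ℝ := fun x =>
    (φ' x * (x-a)^n - φ x * ((n:ℝ) * (x-a)^(n-1))) / ((x-a)^n)^2 with hDdef
  have hpow' : ∀ x : ℝ, HasDerivAt (fun y : ℝ => (y-a)^n) ((n:ℝ) * (x-a)^(n-1)) x := by
    intro x
    refine ((hasDerivAt_pow n (x-a)).comp x ((hasDerivAt_id x).sub_const a)).congr_deriv ?_
    simp
  have hu' : ∀ x ∈ Set.Ioo a b, HasDerivAt u (D x) x := by
    intro x hx
    have hIx : I ∈ nhds x := Icc_mem_nhds hx.1 hx.2
    have h1 : HasDerivAt φ (φ' x) x :=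
      (hφ' x (Set.Ioo_subset_Icc_self hx)).hasDerivAt hIx
    exact h1.div (hpow' x) (pow_ne_zero _ (sub_ne_zero.mpr (ne_of_gt hx.1)))
  have hub' : HasDerivWithinAt u (D b) I b :=
    (hφ' b hbI).div ((hpow' b).hasDerivWithinAt)
      (pow_ne_zero _ (sub_ne_zero.mpr (ne_of_gt hab)))
  -- from D η = 0 conclude the desired identity
  have key : ∀ η ∈ Set.Ioo a b, D η = 0 →
      K 0 a - ∑ i ∈ Finset.range (n+1), K i η * (a - η)^i / i.factorial = 0 := by
    intro η hη hD
    obtain ⟨m, rfl⟩ : ∃ m, n = m + 1 := ⟨n - 1, by omega⟩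
    have hq : η - a ≠ 0 := sub_ne_zero.mpr (ne_of_gt hη.1)
    have hQ : (η - a)^m ≠ 0 := pow_ne_zero _ hq
    have hden : (((η-a)^(m+1))^2 : ℝ) ≠ 0 := pow_ne_zero _ (pow_ne_zero _ hq)
    have hD2 : (φ' η * (η-a)^(m+1) - φ η * (((m+1:ℕ):ℝ) * (η-a)^((m+1)-1)))
        / ((η-a)^(m+1))^2 = 0 := hD
    have hnum := (div_eq_zero_iff.mp hD2).resolve_right hden
    have hφ'η : φ' η = -(K (m+1) η * (a - η)^m / (m.factorial : ℝ)) := by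
      show -(K (m+1) η * (a - η)^((m+1)-1) / (((m+1)-1).factorial : ℝ)) = _
      norm_num
    rw [hφ'η, show (m+1)-1 = m from rfl] at hnum
    push_cast at hnum
    have h3 : (η-a)^m * (-(K (m+1) η * (a-η)^m / (m.factorial:ℝ)) * (η-a)
        - φ η * ((m:ℝ)+1)) = 0 := by
      linear_combination hnum
    have hbr := (mul_eq_zero.mp h3).resolve_left hQ
    have hφη : φ η = K 0 a - ∑ i ∈ Finset.range (m+1), K i η * (a - η)^i / i.factorial := rfl
    have hm1f : (((m+1).factorial : ℝ)) = ((m:ℝ)+1) * (m.factorial : ℝ) := by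
      rw [Nat.factorial_succ]; push_cast; ring
    have hgoal : φ η - K (m+1) η * (a-η)^(m+1) / (((m+1).factorial : ℝ)) = 0 := by
      have hmf : (m.factorial : ℝ) ≠ 0 := Nat.cast_ne_zero.mpr (Nat.factorial_ne_zero m)
      have hm1f' : (((m+1).factorial : ℝ)) ≠ 0 := Nat.cast_ne_zero.mpr (Nat.factorial_ne_zero _)
      rw [sub_eq_zero, eq_div_iff hm1f', hm1f]
      field_simp [hmf] at hbr
      linear_combination -hbr
    rw [Finset.sum_range_succ]
    rw [hφη] at hgoal
    linarith
  -- find η with D η = 0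
  suffices hs : ∃ η ∈ Set.Ioo a b, D η = 0 by
    obtain ⟨η, hη, hDη⟩ := hs
    exact ⟨η, hη, key η hη hDη⟩
  rcases lt_trichotomy (u b) 0 with hub0|hub0|hub0
  · -- minimum case
    have hφbneg : φ b < 0 := by
      have h := hub0
      rw [show u b = φ b / (b-a)^n from rfl, div_neg_iff] at h
      rcases h with h|h
      · linarith [h.2]
      · exact h.1
    have hDb : 0 < D b := by
      show 0 < (φ' b * (b-a)^n - φ b * ((n:ℝ) * (b-a)^(n-1))) / ((b-a)^n)^2
      have hba : 0 < b - a := sub_pos.mpr hab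
      apply div_pos _ (pow_pos (pow_pos hba n) 2)
      rw [hφ'b]
      have h2 : (0:ℝ) < (b-a)^(n-1) := pow_pos hba _
      have h3 : (0:ℝ) < (n:ℝ) := by exact_mod_cast Nat.pos_of_ne_zero (by omega)
      have h4 := mul_neg_of_neg_of_pos hφbneg (mul_pos h3 h2)
      linarith
    have hslope := hasDerivWithinAt_iff_tendsto_slope.mp hub'
    have hev : ∀ᶠ y in nhdsWithin b (I \ {b}), 0 < slope u b y :=
      hslope.eventually (eventually_gt_nhds hDb)
    have hne : (nhdsWithin b (Set.Ioo a b)).NeBot := right_nhdsWithin_Ioo_neBot hab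
    have hsub : Set.Ioo a b ⊆ I \ {b} :=
      fun y hy => ⟨Set.Ioo_subset_Icc_self hy, ne_of_lt hy.2⟩
    have hev2 : ∀ᶠ y in nhdsWithin b (Set.Ioo a b), 0 < slope u b y :=
      hev.filter_mono (nhdsWithin_mono _ hsub)
    obtain ⟨y, hyI, hy⟩ := (eventually_mem_nhdsWithin.and hev2).exists
    have hyb : y - b < 0 := sub_neg.mpr hyI.2
    have huy : u y < u b := by
      rw [slope_def_field] at hy
      rcases div_pos_iff.mp hy with h|h
      · linarith [h.2]
      · linarith [h.1]
    obtain ⟨c, hcI, hc⟩ := isCompact_Icc.exists_isMinOn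
      (Set.nonempty_Icc.mpr (le_of_lt hab)) hucont
    have hcy : u c ≤ u y := isMinOn_iff.mp hc y (Set.Ioo_subset_Icc_self hyI)
    have hcb : u c < u b := lt_of_le_of_lt hcy huy
    have hca : u c < u a := by rw [hua]; linarith
    have hcIoo : c ∈ Set.Ioo a b := by
      constructor
      · rcases eq_or_lt_of_le hcI.1 with h|h
        · exact absurd (h ▸ hca) (lt_irrefl _)
        · exact h
      · rcases eq_or_lt_of_le hcI.2 with h|h
        · exact absurd (h ▸ hcb) (lt_irrefl _)
        · exact h
    have hlm : IsLocalMin u c := hc.isLocalMin (Icc_mem_nhds hcIoo.1 hcIoo.2)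
    exact ⟨c, hcIoo, hlm.hasDerivAt_eq_zero (hu' c hcIoo)⟩
  · -- Rolle case
    have heq : u a = u b := by rw [hua, hub0]
    exact exists_hasDerivAt_eq_zero hab hucont heq hu'
  · -- maximum case
    have hφbpos : 0 < φ b := by
      have h := hub0
      rw [show u b = φ b / (b-a)^n from rfl, div_pos_iff] at h
      rcases h with h|h
      · exact h.1
      · linarith [h.2]
    have hDb : D b < 0 := by
      show (φ' b * (b-a)^n - φ b * ((n:ℝ) * (b-a)^(n-1))) / ((b-a)^n)^2 < 0
      have hba : 0 < b - a := sub_pos.mpr hab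
      apply div_neg_of_neg_of_pos _ (pow_pos (pow_pos hba n) 2)
      rw [hφ'b]
      have h2 : (0:ℝ) < (b-a)^(n-1) := pow_pos hba _
      have h3 : (0:ℝ) < (n:ℝ) := by exact_mod_cast Nat.pos_of_ne_zero (by omega)
      have h4 := mul_pos hφbpos (mul_pos h3 h2)
      linarith
    have hslope := hasDerivWithinAt_iff_tendsto_slope.mp hub'
    have hev : ∀ᶠ y in nhdsWithin b (I \ {b}), slope u b y < 0 :=
      hslope.eventually (eventually_lt_nhds hDb)
    have hne : (nhdsWithin b (Set.Ioo a b)).NeBot := right_nhdsWithin_Ioo_neBot hab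
    have hsub : Set.Ioo a b ⊆ I \ {b} :=
      fun y hy => ⟨Set.Ioo_subset_Icc_self hy, ne_of_lt hy.2⟩
    have hev2 : ∀ᶠ y in nhdsWithin b (Set.Ioo a b), slope u b y < 0 :=
      hev.filter_mono (nhdsWithin_mono _ hsub)
    obtain ⟨y, hyI, hy⟩ := (eventually_mem_nhdsWithin.and hev2).exists
    have hyb : y - b < 0 := sub_neg.mpr hyI.2
    have huy : u b < u y := by
      rw [slope_def_field] at hy
      rcases div_neg_iff.mp hy with h|h
      · linarith [h.2]
      · linarith [h.1]
    obtain ⟨c, hcI, hc⟩ := isCompact_Icc.exists_isMaxOn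
      (Set.nonempty_Icc.mpr (le_of_lt hab)) hucont
    have hcy : u y ≤ u c := isMaxOn_iff.mp hc y (Set.Ioo_subset_Icc_self hyI)
    have hcb : u b < u c := lt_of_lt_of_le huy hcy
    have hca : u a < u c := by rw [hua]; linarith
    have hcIoo : c ∈ Set.Ioo a b := by
      constructor
      · rcases eq_or_lt_of_le hcI.1 with h|h
        · exact absurd (h ▸ hca) (lt_irrefl _)
        · exact h
      · rcases eq_or_lt_of_le hcI.2 with h|h
        · exact absurd (h ▸ hcb) (lt_irrefl _)
        · exact h
    have hlm : IsLocalMax u c := hc.isLocalMax (Icc_mem_nhds hcIoo.1 hcIoo.2)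
    exact ⟨c, hcIoo, hlm.hasDerivAt_eq_zero (hu' c hcIoo)⟩

/-- The `n`-th Taylor polynomial of a function with derivative family `F`
(`F i` is the `i`-th derivative of `F 0`), centered at `x₀`, evaluated at `x`. -/
noncomputable def taylorPoly (F : ℕ → ℝ → ℝ) (n : ℕ) (x₀ x : ℝ) : ℝ :=
  ∑ i ∈ Finset.range (n + 1), F i x₀ / (Nat.factorial i) * (x - x₀) ^ i

/-- **Two-function generalization of Pawlikowska's theorem.**
`F i` and `G i` are the `i`-th derivatives of `f = F 0` and `g = G 0`. -/
theorem pawlikowska_two_functions (a b : ℝ) (hab : a < b) (n : ℕ) (hn : 1 ≤ n)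
    (F G : ℕ → ℝ → ℝ)
    (hF : ∀ i < n, ∀ x ∈ Set.Icc a b,
      HasDerivWithinAt (F i) (F (i + 1) x) (Set.Icc a b) x)
    (hG : ∀ i < n, ∀ x ∈ Set.Icc a b,
      HasDerivWithinAt (G i) (G (i + 1) x) (Set.Icc a b) x)
    (hends : G n a ≠ G n b) :
    ∃ η ∈ Set.Ioo a b,
      F 0 a - taylorPoly F n η a =
        (F n b - F n a) / (G n b - G n a) * (G 0 a - taylorPoly G n η a) := by
  have hGne : G n b - G n a ≠ 0 := sub_ne_zero.mpr (Ne.symm hends)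
  set L : ℝ := (F n b - F n a) / (G n b - G n a) with hL
  set c : ℝ := F n a - L * G n a with hc
  set K : ℕ → ℝ → ℝ := fun i x => F i x - L * G i x - c * x^(n-i) / ((n-i).factorial : ℝ)
    with hKdef
  have hKa : K n a = 0 := by
    show F n a - L * G n a - c * a^(n-n) / ((n-n).factorial : ℝ) = 0
    rw [Nat.sub_self]
    simp [hc]
  have hKb : K n b = 0 := by
    show F n b - L * G n b - c * b^(n-n) / ((n-n).factorial : ℝ) = 0
    rw [Nat.sub_self]
    simp only [pow_zero, Nat.factorial_zero, Nat.cast_one, mul_one, div_one]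
    rw [hc, hL]
    field_simp
    ring
  have hKd : ∀ i < n, ∀ x ∈ Set.Icc a b, HasDerivWithinAt (K i) (K (i+1) x) (Set.Icc a b) x := by
    intro i hi x hx
    have h1 := (hF i hi x hx).sub ((hG i hi x hx).const_mul L)
    have h2 : HasDerivAt (fun y : ℝ => c * y^(n-i) / ((n-i).factorial : ℝ))
        (c * x^(n-(i+1)) / ((n-(i+1)).factorial : ℝ)) x := by
      obtain ⟨k, hk⟩ : ∃ k, n - i = k + 1 := ⟨n - i - 1, by omega⟩
      have h3 : HasDerivAt (fun y : ℝ => y^(n-i)) (((n-i : ℕ) : ℝ) * x^(n-i-1)) x := by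
        simpa using hasDerivAt_pow (n-i) x
      have h4 := (h3.const_mul c).div_const ((n-i).factorial : ℝ)
      refine HasDerivAt.congr_deriv h4 ?_
      rw [hk, show n - (i+1) = k by omega, Nat.factorial_succ, show k + 1 - 1 = k from rfl]
      push_cast
      have hkf : ((k.factorial : ℝ)) ≠ 0 := Nat.cast_ne_zero.mpr (Nat.factorial_ne_zero _)
      have hk1 : ((k:ℝ)+1) ≠ 0 := by positivity
      field_simp
    exact h1.sub h2.hasDerivWithinAt
  obtain ⟨η, hη, hkey⟩ := pawlikowska_zero a b hab n hn K hKd hKa hKb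
  refine ⟨η, hη, ?_⟩
  have hbinom : ∑ i ∈ Finset.range (n+1),
      c * η^(n-i) / ((n-i).factorial : ℝ) * (a-η)^i / (i.factorial : ℝ)
      = c * a^n / (n.factorial : ℝ) := by
    have hxy := add_pow (a - η) η n
    rw [sub_add_cancel] at hxy
    rw [show c * a^n / (n.factorial:ℝ)
        = ∑ i ∈ Finset.range (n+1),
          c * ((a-η)^i * η^(n-i) * ((n.choose i : ℕ) : ℝ)) / (n.factorial : ℝ) by
      rw [← Finset.sum_div, ← Finset.mul_sum, ← hxy]]
    apply Finset.sum_congr rfl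
    intro i hi
    clear_value K c L
    have hile : i ≤ n := Nat.lt_succ_iff.mp (Finset.mem_range.mp hi)
    have hch : ((n.choose i : ℕ) : ℝ) * (i.factorial : ℝ) * ((n-i).factorial : ℝ)
        = (n.factorial : ℝ) := by
      exact_mod_cast congrArg (Nat.cast (R := ℝ)) (Nat.choose_mul_factorial_mul_factorial hile)
    have h1 : (i.factorial : ℝ) ≠ 0 := Nat.cast_ne_zero.mpr (Nat.factorial_ne_zero _)
    have h2 : ((n-i).factorial : ℝ) ≠ 0 := Nat.cast_ne_zero.mpr (Nat.factorial_ne_zero _)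
    have h3 : (n.factorial : ℝ) ≠ 0 := Nat.cast_ne_zero.mpr (Nat.factorial_ne_zero _)
    field_simp
    linear_combination (-(c * η^(n-i) * (a-η)^i)) * hch
  have hsum : ∑ i ∈ Finset.range (n+1), K i η * (a - η)^i / (i.factorial : ℝ)
      = (∑ i ∈ Finset.range (n+1), F i η * (a - η)^i / (i.factorial : ℝ))
        - L * (∑ i ∈ Finset.range (n+1), G i η * (a - η)^i / (i.factorial : ℝ))
        - c * a^n / (n.factorial : ℝ) := by
    rw [← hbinom, Finset.mul_sum, ← Finset.sum_sub_distrib, ← Finset.sum_sub_distrib]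
    apply Finset.sum_congr rfl
    intro i _
    show (F i η - L * G i η - c * η^(n-i) / ((n-i).factorial : ℝ)) * (a-η)^i / (i.factorial:ℝ) = _
    ring
  have hK0a : K 0 a = F 0 a - L * G 0 a - c * a^n / (n.factorial : ℝ) := by
    show F 0 a - L * G 0 a - c * a^(n-0) / ((n-0).factorial : ℝ) = _
    rw [Nat.sub_zero]
  have htF : taylorPoly F n η a
      = ∑ i ∈ Finset.range (n+1), F i η * (a - η)^i / (i.factorial:ℝ) := by
    rw [taylorPoly]
    exact Finset.sum_congr rfl (fun i _ => by ring)
  have htG : taylorPoly G n η a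
      = ∑ i ∈ Finset.range (n+1), G i η * (a - η)^i / (i.factorial:ℝ) := by
    rw [taylorPoly]
    exact Finset.sum_congr rfl (fun i _ => by ring)
  rw [htF, htG]
  rw [hK0a, hsum] at hkey
  linear_combination hkey
end

section
/- First step of the iteration: Let a < b be real numbers, let n ≥ 1, and let f : [a,b] → ℝ be n-times differentiable on [a,b] with f⁽ⁿ⁾(a) = f⁽ⁿ⁾(b). Then there exists u₁ ∈ (a,b) such that f⁽ⁿ⁻¹⁾(u₁) - f⁽ⁿ⁻¹⁾(a) = (u₁ - a) f⁽ⁿ⁾(u₁). -/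
open Set Filter Topology

private lemma flett_max (f f' : ℝ → ℝ) (a b : ℝ) (hab : a < b)
    (hf : ∀ x ∈ Icc a b, HasDerivWithinAt f (f' x) (Icc a b) x)
    (ha : f' a = 0) (hb : f' b = 0) (hlt : f a < f b) :
    ∃ u ∈ Ioo a b, f u - f a = (u - a) * f' u := by
  set g : ℝ → ℝ := fun x => if x = a then 0 else (f x - f a) / (x - a) with hg
  have hga : g a = 0 := by simp [hg]
  have hgq : ∀ x : ℝ, x ≠ a → g x = (f x - f a) / (x - a) := fun x hx => by simp [hg, hx]
  have hfc : ContinuousOn f (Icc a b) := fun x hx => (hf x hx).continuousWithinAt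
  have hgc : ContinuousOn g (Icc a b) := by
    intro x hx
    rcases eq_or_ne x a with rfl | hxa
    · rw [← continuousWithinAt_diff_self]
      have hslope : Tendsto (slope f x) (𝓝[Icc x b \ {x}] x) (𝓝 (f' x)) :=
        hasDerivWithinAt_iff_tendsto_slope.mp (hf x hx)
      rw [ContinuousWithinAt, hga, ← ha]
      refine hslope.congr' ?_
      filter_upwards [self_mem_nhdsWithin] with y hy
      rw [hgq y hy.2, slope_def_field]
    · have hq : ContinuousWithinAt (fun y => (f y - f a) / (y - a)) (Icc a b) x :=
        ((hfc x hx).sub continuousWithinAt_const).div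
          ((continuousWithinAt_id).sub continuousWithinAt_const) (sub_ne_zero.mpr hxa)
      refine hq.congr_of_eventuallyEq ?_ (hgq x hxa)
      filter_upwards [mem_nhdsWithin_of_mem_nhds (isOpen_ne.mem_nhds hxa)] with y hy
      exact hgq y hy
  obtain ⟨u, huI, hmax⟩ := isCompact_Icc.exists_isMaxOn (nonempty_Icc.mpr hab.le) hgc
  have hgb : g b = (f b - f a) / (b - a) := hgq b hab.ne'
  have hgbpos : 0 < g b := by
    rw [hgb]; exact div_pos (sub_pos.mpr hlt) (sub_pos.mpr hab)
  have hua : u ≠ a := by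
    intro h; rw [h] at hmax
    have := hmax (right_mem_Icc.mpr hab.le)
    simp only [hga] at this
    exact absurd (lt_of_lt_of_le hgbpos this) (lt_irrefl 0)
  have hub : u ≠ b := by
    intro h
    have hD : HasDerivWithinAt g (f' b * (b - a)⁻¹ + (f b - f a) * (-((b-a)^2)⁻¹))
        (Icc a b) b := by
      have h1 : HasDerivWithinAt (fun y => (f y - f a) * (y - a)⁻¹)
          (f' b * (b - a)⁻¹ + (f b - f a) * (-((b-a)^2)⁻¹)) (Icc a b) b := by
        have hinv : HasDerivWithinAt (fun y : ℝ => (y - a)⁻¹) (-((b-a)^2)⁻¹) (Icc a b) b := by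
          have := ((hasDerivWithinAt_id b (Icc a b)).sub_const a).inv (sub_ne_zero.mpr hab.ne')
          exact this.congr_deriv (by simp [neg_div, one_div])
        exact ((hf b (right_mem_Icc.mpr hab.le)).sub_const (f a)).mul hinv
      refine h1.congr_of_mem ?_ (right_mem_Icc.mpr hab.le)
      intro y hy
      rcases eq_or_ne y a with rfl | hya
      · simp [hga]
      · rw [hgq y hya, div_eq_mul_inv]
    have hDval : f' b * (b - a)⁻¹ + (f b - f a) * (-((b-a)^2)⁻¹) < 0 := by
      rw [hb]
      have h1 : 0 < (f b - f a) * ((b-a)^2)⁻¹ :=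
        mul_pos (sub_pos.mpr hlt) (inv_pos.mpr (pow_pos (sub_pos.mpr hab) 2))
      linarith
    have hslope : Tendsto (slope g b) (𝓝[Icc a b \ {b}] b)
        (𝓝 (f' b * (b - a)⁻¹ + (f b - f a) * (-((b-a)^2)⁻¹))) :=
      hasDerivWithinAt_iff_tendsto_slope.mp hD
    have hclos : b ∈ closure (Icc a b \ {b}) := by
      rw [Icc_sdiff_right, closure_Ico hab.ne]
      exact right_mem_Icc.mpr hab.le
    have hNB : (𝓝[Icc a b \ {b}] b).NeBot := mem_closure_iff_nhdsWithin_neBot.mp hclos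
    have hev : ∀ᶠ y in 𝓝[Icc a b \ {b}] b, slope g b y < 0 :=
      hslope.eventually (Iio_mem_nhds hDval)
    obtain ⟨y, hys, hyI⟩ := (hev.and self_mem_nhdsWithin).exists
    have hyb : y < b := lt_of_le_of_ne hyI.1.2 (by simpa using hyI.2)
    have hs : (g y - g b) / (y - b) < 0 := by
      have := hys; rwa [slope_def_field] at this
    have hgy : g b < g y := by
      rcases div_neg_iff.mp hs with ⟨h1, h2⟩ | ⟨h1, h2⟩
      · linarith
      · linarith
    have h5 : g y ≤ g u := hmax hyI.1
    rw [← h] at hgy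
    linarith
  have huIoo : u ∈ Ioo a b := ⟨lt_of_le_of_ne huI.1 (Ne.symm hua), lt_of_le_of_ne huI.2 hub⟩
  have hune : u - a ≠ 0 := sub_ne_zero.mpr hua
  have hDu : HasDerivAt g (f' u * (u - a)⁻¹ + (f u - f a) * (-((u-a)^2)⁻¹)) u := by
    have hmem : Icc a b ∈ 𝓝 u := Icc_mem_nhds huIoo.1 huIoo.2
    have h1 : HasDerivAt (fun y => (f y - f a) * (y - a)⁻¹)
        (f' u * (u - a)⁻¹ + (f u - f a) * (-((u-a)^2)⁻¹)) u := by
      have hinv : HasDerivAt (fun y : ℝ => (y - a)⁻¹) (-((u-a)^2)⁻¹) u := by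
        have := ((hasDerivAt_id u).sub_const a).inv hune
        exact this.congr_deriv (by simp [neg_div, one_div])
      exact (((hf u huI).hasDerivAt hmem).sub_const (f a)).mul hinv
    refine h1.congr_of_eventuallyEq ?_
    filter_upwards [isOpen_ne.mem_nhds hua] with y hy
    rw [hgq y hy, div_eq_mul_inv]
  have hzero : f' u * (u - a)⁻¹ + (f u - f a) * (-((u-a)^2)⁻¹) = 0 :=
    (hmax.isLocalMax (Icc_mem_nhds huIoo.1 huIoo.2)).hasDerivAt_eq_zero hDu
  refine ⟨u, huIoo, ?_⟩
  have h3 : f' u * (u - a)⁻¹ = (f u - f a) * ((u-a)^2)⁻¹ := by linarith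
  field_simp at h3
  exact mul_left_cancel₀ hune (by linear_combination (-(u - a)) * h3)

private lemma flett_zero (f f' : ℝ → ℝ) (a b : ℝ) (hab : a < b)
    (hf : ∀ x ∈ Icc a b, HasDerivWithinAt f (f' x) (Icc a b) x)
    (ha : f' a = 0) (hb : f' b = 0) :
    ∃ u ∈ Ioo a b, f u - f a = (u - a) * f' u := by
  rcases lt_trichotomy (f a) (f b) with h | h | h
  · exact flett_max f f' a b hab hf ha hb h
  · set g : ℝ → ℝ := fun x => if x = a then 0 else (f x - f a) / (x - a) with hg
    have hga : g a = 0 := by simp [hg]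
    have hgq : ∀ x : ℝ, x ≠ a → g x = (f x - f a) / (x - a) := fun x hx => by simp [hg, hx]
    have hfc : ContinuousOn f (Icc a b) := fun x hx => (hf x hx).continuousWithinAt
    have hgc : ContinuousOn g (Icc a b) := by
      intro x hx
      rcases eq_or_ne x a with rfl | hxa
      · rw [← continuousWithinAt_diff_self]
        have hslope : Tendsto (slope f x) (𝓝[Icc x b \ {x}] x) (𝓝 (f' x)) :=
          hasDerivWithinAt_iff_tendsto_slope.mp (hf x hx)
        rw [ContinuousWithinAt, hga, ← ha]
        refine hslope.congr' ?_
        filter_upwards [self_mem_nhdsWithin] with y hy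
        rw [hgq y hy.2, slope_def_field]
      · have hq : ContinuousWithinAt (fun y => (f y - f a) / (y - a)) (Icc a b) x :=
          ((hfc x hx).sub continuousWithinAt_const).div
            ((continuousWithinAt_id).sub continuousWithinAt_const) (sub_ne_zero.mpr hxa)
        refine hq.congr_of_eventuallyEq ?_ (hgq x hxa)
        filter_upwards [mem_nhdsWithin_of_mem_nhds (isOpen_ne.mem_nhds hxa)] with y hy
        exact hgq y hy
    have hgb : g b = 0 := by rw [hgq b hab.ne', h]; simp
    have hderiv : ∀ x ∈ Ioo a b,
        HasDerivAt g (f' x * (x - a)⁻¹ + (f x - f a) * (-((x-a)^2)⁻¹)) x := by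
      intro x hx
      have hxa : x ≠ a := hx.1.ne'
      have hxne : x - a ≠ 0 := sub_ne_zero.mpr hxa
      have hmem : Icc a b ∈ 𝓝 x := Icc_mem_nhds hx.1 hx.2
      have h1 : HasDerivAt (fun y => (f y - f a) * (y - a)⁻¹)
          (f' x * (x - a)⁻¹ + (f x - f a) * (-((x-a)^2)⁻¹)) x := by
        have hinv : HasDerivAt (fun y : ℝ => (y - a)⁻¹) (-((x-a)^2)⁻¹) x := by
          have := ((hasDerivAt_id x).sub_const a).inv hxne
          exact this.congr_deriv (by simp [neg_div, one_div])
        exact (((hf x (Ioo_subset_Icc_self hx)).hasDerivAt hmem).sub_const (f a)).mul hinv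
      refine h1.congr_of_eventuallyEq ?_
      filter_upwards [isOpen_ne.mem_nhds hxa] with y hy
      rw [hgq y hy, div_eq_mul_inv]
    obtain ⟨u, huIoo, hzero⟩ := exists_hasDerivAt_eq_zero hab hgc
      (by rw [hga, hgb]) (fun x hx => hderiv x hx)
    refine ⟨u, huIoo, ?_⟩
    have hune : u - a ≠ 0 := sub_ne_zero.mpr huIoo.1.ne'
    have h3 : f' u * (u - a)⁻¹ = (f u - f a) * ((u-a)^2)⁻¹ := by linarith
    field_simp at h3
    exact mul_left_cancel₀ hune (by linear_combination (-(u - a)) * h3)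
  · obtain ⟨u, huIoo, hu⟩ := flett_max (fun x => -f x) (fun x => -f' x) a b hab
      (fun x hx => (hf x hx).neg) (by simp [ha]) (by simp [hb]) (by simpa using h)
    refine ⟨u, huIoo, ?_⟩
    linear_combination -hu

private lemma flett (f f' : ℝ → ℝ) (a b : ℝ) (hab : a < b)
    (hf : ∀ x ∈ Icc a b, HasDerivWithinAt f (f' x) (Icc a b) x)
    (hends : f' a = f' b) :
    ∃ u ∈ Ioo a b, f u - f a = (u - a) * f' u := by
  set c := f' a with hc
  obtain ⟨u, huIoo, hu⟩ := flett_zero (fun x => f x - c * x) (fun x => f' x - c) a b hab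
    (fun x hx => (hf x hx).sub (((hasDerivWithinAt_id x (Icc a b)).const_mul c).congr_deriv
      (by simp))) (by simp [hc]) (by simp [← hends])
  exact ⟨u, huIoo, by linear_combination hu⟩

/-- **First step of the iteration** in the new proof of Pawlikowska's theorem.
`F i` denotes the `i`-th derivative of `f = F 0`. -/
theorem pawlikowska_first_step (a b : ℝ) (hab : a < b) (n : ℕ) (hn : 1 ≤ n)
    (F : ℕ → ℝ → ℝ)
    (hF : ∀ i < n, ∀ x ∈ Set.Icc a b,
      HasDerivWithinAt (F i) (F (i + 1) x) (Set.Icc a b) x)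
    (hends : F n a = F n b) :
    ∃ u₁ ∈ Set.Ioo a b, F (n - 1) u₁ - F (n - 1) a = (u₁ - a) * F n u₁ := by
  have h1 : n - 1 + 1 = n := Nat.succ_pred_eq_of_pos hn
  have hf : ∀ x ∈ Icc a b, HasDerivWithinAt (F (n - 1)) (F n x) (Icc a b) x := by
    intro x hx
    have := hF (n - 1) (by omega) x hx
    rwa [h1] at this
  exact flett (F (n - 1)) (F n) a b hab hf hends
end
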